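/- (Best-of-n KL bound) Let π_0 be a distribution over a finite set and let π_n be the distribution of the best of n i.i.d. samples from π_0 under any fixed total ordering (ties broken by a fixed rule), i.e., the rejection-sampling/best-of-n policy. Then KL(π_n ∥ π_0) ≤ log n - (n-1)/n. -/

import Mathlib

open Finset

/-- KL divergence between two finite distributions. -/
noncomputable def klDiv {A : Type*} [Fintype A] (p q : A → ℝ) : ℝ :=
  ∑ a, p a * Real.log (p a / q a)


noncomputable def Gaux (n : ℕ) (x : ℝ) : ℝ :=
  x ^ n * Real.log n + ((n : ℝ) - 1) * (x ^ n * Real.log x) - ((n : ℝ) - 1) / n * x ^ n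

lemma Gaux_zero (n : ℕ) (hn : 1 ≤ n) : Gaux n 0 = 0 := by
  simp [Gaux, zero_pow (by omega : n ≠ 0)]

lemma Gaux_one (n : ℕ) : Gaux n 1 = Real.log n - ((n : ℝ) - 1) / n := by
  simp [Gaux]

noncomputable def maux (n : ℕ) (y t : ℝ) : ℝ := ∑ k ∈ Finset.range n, t ^ k * y ^ (n - 1 - k)

lemma maux_mul (n : ℕ) (y t : ℝ) : (t - y) * maux n y t = t ^ n - y ^ n := by
  rw [maux, mul_comm]; exact geom_sum₂_mul t y n

lemma hasDerivAt_maux (n : ℕ) (y t : ℝ) :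
    HasDerivAt (maux n y) (∑ k ∈ Finset.range n, ((k : ℝ) * t ^ (k - 1)) * y ^ (n - 1 - k)) t := by
  apply HasDerivAt.fun_sum
  intro k _
  exact (hasDerivAt_pow k t).mul_const _

lemma maux_deriv_identity (n : ℕ) (y t : ℝ) :
    maux n y t + (t - y) * (∑ k ∈ Finset.range n, ((k : ℝ) * t ^ (k - 1)) * y ^ (n - 1 - k))
      = n * t ^ (n - 1) := by
  have h1 : HasDerivAt (fun s => (s - y) * maux n y s)
      (1 * maux n y t + (t - y) * (∑ k ∈ Finset.range n, ((k : ℝ) * t ^ (k - 1)) * y ^ (n - 1 - k))) t :=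
    ((hasDerivAt_id t).sub_const y).mul (hasDerivAt_maux n y t)
  have h2 : (fun s => (s - y) * maux n y s) = fun s => s ^ n - y ^ n :=
    funext fun s => maux_mul n y s
  rw [h2] at h1
  have h3 : HasDerivAt (fun s => s ^ n - y ^ n) ((n : ℝ) * t ^ (n - 1)) t :=
    (hasDerivAt_pow n t).sub_const _
  have := h1.unique h3
  linarith

lemma maux_zero (n : ℕ) (hn : 1 ≤ n) (t : ℝ) : maux n 0 t = t ^ (n - 1) := by
  rw [maux, Finset.sum_eq_single (n - 1)]
  · simp
  · intro k hk hne
    rw [zero_pow (by simp at hk; omega), mul_zero]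
  · intro h
    exact absurd (Finset.mem_range.mpr (by omega)) h

lemma log_nat_ge (n : ℕ) (hn : 1 ≤ n) : ((n : ℝ) - 1) / n ≤ Real.log n := by
  have hN : (0 : ℝ) < n := by exact_mod_cast hn
  have h := Real.log_le_sub_one_of_pos (show (0:ℝ) < (n:ℝ)⁻¹ by positivity)
  rw [Real.log_inv] at h
  have he : ((n : ℝ) - 1) / n = 1 - (n : ℝ)⁻¹ := by field_simp
  rw [he]; linarith

lemma key_ineq (n : ℕ) (hn : 1 ≤ n) {y x : ℝ} (hy : 0 ≤ y) (hyx : y < x) (hx1 : x ≤ 1) :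
    (x ^ n - y ^ n) * Real.log (maux n y x) ≤ Gaux n x - Gaux n y := by
  have hN : (0 : ℝ) < n := by exact_mod_cast hn
  rcases eq_or_lt_of_le hy with hy0 | hy0
  · -- y = 0
    rw [← hy0]
    have hx0 : 0 < x := by linarith
    rw [maux_zero n hn, Gaux_zero n hn, Real.log_pow, Nat.cast_sub hn, Nat.cast_one]
    have hxn : 0 ≤ x ^ n := by positivity
    have hlog := log_nat_ge n hn
    simp only [Gaux, zero_pow (by omega : n ≠ 0), sub_zero]
    nlinarith
  · -- 0 < y
    set h : ℝ → ℝ := fun t => Gaux n t - (t ^ n - y ^ n) * Real.log (maux n y t) with hh_def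
    have hmpos : ∀ t ∈ Set.Icc y x, 0 < maux n y t := by
      intro t ht
      have ht0 : 0 < t := lt_of_lt_of_le hy0 ht.1
      apply Finset.sum_pos'
      · intro k _; positivity
      · exact ⟨0, Finset.mem_range.mpr (by omega), by positivity⟩
    have hcont : ContinuousOn h (Set.Icc y x) := by
      have hne : ∀ t ∈ Set.Icc y x, t ≠ 0 := fun t ht => ne_of_gt (lt_of_lt_of_le hy0 ht.1)
      have hlog : ContinuousOn Real.log (Set.Icc y x) :=
        Real.continuousOn_log.mono (fun t ht => hne t ht)
      have hmc : Continuous (maux n y) := by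
        apply continuous_finset_sum
        intro k _
        exact (continuous_pow k).mul continuous_const
      have hG : ContinuousOn (fun t => Gaux n t) (Set.Icc y x) := by
        simp only [Gaux]
        exact (((continuous_pow n).continuousOn.mul continuousOn_const).add
          (continuousOn_const.mul ((continuous_pow n).continuousOn.mul hlog))).sub
          (continuousOn_const.mul (continuous_pow n).continuousOn)
      apply hG.sub
      apply ContinuousOn.mul
      · exact ((continuous_pow n).continuousOn.sub continuousOn_const)
      · exact ContinuousOn.log hmc.continuousOn (fun t ht => ne_of_gt (hmpos t ht))
    have hD : ∀ t ∈ Set.Ioo y x, ∃ d, HasDerivAt h d t ∧ 0 ≤ d := by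
      intro t ht
      have ht0 : 0 < t := lt_trans hy0 ht.1
      have hm : 0 < maux n y t := hmpos t ⟨ht.1.le, ht.2.le⟩
      set md := ∑ k ∈ Finset.range n, ((k : ℝ) * t ^ (k - 1)) * y ^ (n - 1 - k) with hmd_def
      have hmd : HasDerivAt (maux n y) md t := hasDerivAt_maux n y t
      have hA : HasDerivAt (fun s : ℝ => s ^ n) ((n : ℝ) * t ^ (n - 1)) t := hasDerivAt_pow n t
      have hlogt : HasDerivAt Real.log t⁻¹ t := Real.hasDerivAt_log (ne_of_gt ht0)
      have hG : HasDerivAt (fun s => Gaux n s)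
          (((n : ℝ) * t ^ (n - 1) * Real.log n)
            + ((n : ℝ) - 1) * ((n : ℝ) * t ^ (n - 1) * Real.log t + t ^ n * t⁻¹)
            - ((n : ℝ) - 1) / n * ((n : ℝ) * t ^ (n - 1))) t := by
        simp only [Gaux]
        exact ((hA.mul_const (Real.log n)).add ((hA.mul hlogt).const_mul ((n : ℝ) - 1))).sub
          (hA.const_mul (((n : ℝ) - 1) / n))
      have hP : HasDerivAt (fun s => (s ^ n - y ^ n) * Real.log (maux n y s))
          ((n : ℝ) * t ^ (n - 1) * Real.log (maux n y t)
            + (t ^ n - y ^ n) * (md / maux n y t)) t :=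
        (hA.sub_const _).mul (hmd.log (ne_of_gt hm))
      refine ⟨_, hG.sub hP, ?_⟩
      -- nonnegativity of the derivative
      have hg : (0 : ℝ) < (n : ℝ) * t ^ (n - 1) := by positivity
      have e1 : t ^ n * t⁻¹ = t ^ (n - 1) := by
        have : t ^ n = t ^ (n - 1) * t := by
          conv_lhs => rw [show n = (n - 1) + 1 by omega]
          rw [pow_succ]
        rw [this, mul_assoc, mul_inv_cancel₀ (ne_of_gt ht0), mul_one]
      have e2 : ((n : ℝ) - 1) / n * ((n : ℝ) * t ^ (n - 1)) = ((n : ℝ) - 1) * t ^ (n - 1) := by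
        field_simp
      have e3 : (t ^ n - y ^ n) * (md / maux n y t) = (n : ℝ) * t ^ (n - 1) - maux n y t := by
        have hid := maux_deriv_identity n y t
        calc (t ^ n - y ^ n) * (md / maux n y t)
            = ((t - y) * maux n y t) * (md / maux n y t) := by rw [maux_mul]
          _ = ((t - y) * md) * (maux n y t / maux n y t) := by ring
          _ = (t - y) * md := by rw [div_self (ne_of_gt hm), mul_one]
          _ = (n : ℝ) * t ^ (n - 1) - maux n y t := by linarith
      have e4 : Real.log ((n : ℝ) * t ^ (n - 1))
          = Real.log n + ((n : ℝ) - 1) * Real.log t := by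
        rw [Real.log_mul (ne_of_gt hN) (by positivity), Real.log_pow, Nat.cast_sub hn,
          Nat.cast_one]
      have e5 : 1 - maux n y t / ((n : ℝ) * t ^ (n - 1))
          ≤ Real.log ((n : ℝ) * t ^ (n - 1)) - Real.log (maux n y t) := by
        have h5 := Real.log_le_sub_one_of_pos
          (show 0 < maux n y t / ((n : ℝ) * t ^ (n - 1)) by positivity)
        rw [Real.log_div (ne_of_gt hm) (ne_of_gt hg)] at h5
        linarith
      have e6 : ((n : ℝ) * t ^ (n - 1)) - maux n y t
          ≤ ((n : ℝ) * t ^ (n - 1)) * (Real.log ((n : ℝ) * t ^ (n - 1)) - Real.log (maux n y t)) := by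
        have h6 := mul_le_mul_of_nonneg_left e5 hg.le
        have h7 : ((n : ℝ) * t ^ (n - 1)) * (1 - maux n y t / ((n : ℝ) * t ^ (n - 1)))
            = ((n : ℝ) * t ^ (n - 1)) - maux n y t := by field_simp
        linarith
      rw [e4] at e6
      rw [e1, e2, e3]
      nlinarith [e6]
    have hmono : MonotoneOn h (Set.Icc y x) := by
      apply monotoneOn_of_deriv_nonneg (convex_Icc y x) hcont
      · rw [interior_Icc]
        intro t ht
        obtain ⟨d, hd, _⟩ := hD t ht
        exact hd.differentiableAt.differentiableWithinAt
      · rw [interior_Icc]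
        intro t ht
        obtain ⟨d, hd, hd0⟩ := hD t ht
        rw [hd.deriv]; exact hd0
    have hle := hmono (Set.left_mem_Icc.mpr hyx.le) (Set.right_mem_Icc.mpr hyx.le) hyx.le
    simp only [hh_def, sub_self, zero_mul, sub_zero] at hle
    linarith

/-- best-of-n KL bound: if `πₙ` is the distribution of the
maximum (under a fixed total order) of `n` i.i.d. samples from `π₀`, then
`KL(πₙ ‖ π₀) ≤ log n - (n-1)/n`. -/
theorem stmt17 {A : Type*} [Fintype A] [LinearOrder A]
    (π0 : A → ℝ) (hπ0 : ∀ a, 0 ≤ π0 a) (hπ0sum : ∑ a, π0 a = 1)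
    (n : ℕ) (hn : 1 ≤ n)
    (πn : A → ℝ)
    (hπn : ∀ a, πn a =
      (∑ b ∈ Finset.univ.filter (· ≤ a), π0 b) ^ n
        - (∑ b ∈ Finset.univ.filter (· < a), π0 b) ^ n) :
    klDiv πn π0 ≤ Real.log n - (n - 1) / n := by
  classical
  by_cases hEmpty : Nonempty A
  case neg =>
    rw [not_nonempty_iff] at hEmpty
    rw [Finset.univ_eq_empty, Finset.sum_empty] at hπ0sum
    norm_num at hπ0sum
  set S : A → ℝ := fun a => ∑ b ∈ Finset.univ.filter (· ≤ a), π0 b with hS_def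
  set Sl : A → ℝ := fun a => ∑ b ∈ Finset.univ.filter (· < a), π0 b with hSl_def
  have hπn' : ∀ a, πn a = (S a) ^ n - (Sl a) ^ n := hπn
  -- per-element bound
  have hbound : ∀ a, πn a * Real.log (πn a / π0 a) ≤ Gaux n (S a) - Gaux n (Sl a) := by
    intro a
    have hy0 : 0 ≤ Sl a := Finset.sum_nonneg (fun b _ => hπ0 b)
    have hfil : Finset.univ.filter (· ≤ a) = insert a (Finset.univ.filter (· < a)) := by
      ext b
      simp only [Finset.mem_filter, Finset.mem_univ, true_and, Finset.mem_insert]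
      rw [le_iff_lt_or_eq, or_comm]
    have hxy : S a = Sl a + π0 a := by
      rw [hS_def]
      simp only
      rw [hfil, Finset.sum_insert (by simp)]
      ring
    have hx1 : S a ≤ 1 := by
      rw [← hπ0sum]
      exact Finset.sum_le_sum_of_subset_of_nonneg (Finset.filter_subset _ _)
        (fun b _ _ => hπ0 b)
    rcases eq_or_lt_of_le (hπ0 a) with hq | hq
    · -- π0 a = 0
      have hSS : S a = Sl a := by rw [hxy, ← hq, add_zero]
      have h0 : πn a = 0 := by rw [hπn' a, hSS, sub_self]
      rw [h0, hSS, zero_mul, sub_self]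
    · -- π0 a > 0
      have hyx : Sl a < S a := by rw [hxy]; linarith
      have hratio : πn a / π0 a = maux n (Sl a) (S a) := by
        have hq' : S a - Sl a = π0 a := by rw [hxy]; ring
        rw [hπn' a, ← maux_mul n (Sl a) (S a), hq']
        exact mul_div_cancel_left₀ _ (ne_of_gt hq)
      rw [hratio, hπn' a]
      exact key_ineq n hn hy0 hyx hx1
  -- telescoping
  set M := Fintype.card A with hM
  let e := monoEquivOfFin A (rfl : Fintype.card A = M)
  set π0p : ℕ → ℝ := fun k => if h : k < M then π0 (e ⟨k, h⟩) else 0 with hπ0p_def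
  set W : ℕ → ℝ := fun j => ∑ k ∈ Finset.range j, π0p k with hW_def
  have hWSl : ∀ i : Fin M, Sl (e i) = W i.val := by
    intro i
    simp only [hSl_def, hW_def]
    rw [Finset.sum_filter]
    rw [show (∑ b : A, if b < e i then π0 b else 0)
        = ∑ j : Fin M, (if (e j : A) < e i then π0 (e j) else 0) from
      (Fintype.sum_equiv e.toEquiv _ _ (fun j => rfl)).symm]
    have step : ∀ j : Fin M,
        (if (e j : A) < e i then π0 (e j) else 0)
          = (fun k => if k < i.val then π0p k else 0) j.val := by
      intro j
      simp only [hπ0p_def, j.isLt, dif_pos, Fin.eta, e.lt_iff_lt, Fin.lt_iff_val_lt_val]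
    rw [Finset.sum_congr rfl (fun j _ => step j)]
    rw [Fin.sum_univ_eq_sum_range (fun k => if k < i.val then π0p k else 0) M]
    rw [← Finset.sum_filter]
    congr 1
    ext k
    simp only [Finset.mem_filter, Finset.mem_range]
    have := i.isLt
    omega
  have hWS : ∀ i : Fin M, S (e i) = W (i.val + 1) := by
    intro i
    simp only [hS_def, hW_def]
    rw [Finset.sum_filter]
    rw [show (∑ b : A, if b ≤ e i then π0 b else 0)
        = ∑ j : Fin M, (if (e j : A) ≤ e i then π0 (e j) else 0) from
      (Fintype.sum_equiv e.toEquiv _ _ (fun j => rfl)).symm]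
    have step : ∀ j : Fin M,
        (if (e j : A) ≤ e i then π0 (e j) else 0)
          = (fun k => if k < i.val + 1 then π0p k else 0) j.val := by
      intro j
      simp only [hπ0p_def, j.isLt, dif_pos, Fin.eta, e.le_iff_le, Fin.le_iff_val_le_val,
        Nat.lt_succ_iff]
    rw [Finset.sum_congr rfl (fun j _ => step j)]
    rw [Fin.sum_univ_eq_sum_range (fun k => if k < i.val + 1 then π0p k else 0) M]
    rw [← Finset.sum_filter]
    congr 1
    ext k
    simp only [Finset.mem_filter, Finset.mem_range]
    have := i.isLt
    omega
  have hW0 : W 0 = 0 := by simp [hW_def]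
  have hWM : W M = 1 := by
    simp only [hW_def]
    rw [← Fin.sum_univ_eq_sum_range (fun k => π0p k) M]
    rw [← hπ0sum]
    apply Fintype.sum_equiv e.toEquiv
    intro j
    simp [hπ0p_def, j.isLt]
  calc klDiv πn π0 ≤ ∑ a, (Gaux n (S a) - Gaux n (Sl a)) :=
        Finset.sum_le_sum (fun a _ => hbound a)
    _ = ∑ i : Fin M, (Gaux n (S (e i)) - Gaux n (Sl (e i))) :=
        (Fintype.sum_equiv e.toEquiv _ _ (fun i => rfl)).symm
    _ = ∑ i : Fin M, (Gaux n (W (i.val + 1)) - Gaux n (W i.val)) :=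
        Finset.sum_congr rfl (fun i _ => by rw [hWS i, hWSl i])
    _ = ∑ k ∈ Finset.range M, (Gaux n (W (k + 1)) - Gaux n (W k)) :=
        Fin.sum_univ_eq_sum_range (fun k => Gaux n (W (k + 1)) - Gaux n (W k)) M
    _ = Gaux n (W M) - Gaux n (W 0) := Finset.sum_range_sub (fun k => Gaux n (W k)) M
    _ = Real.log n - ((n : ℝ) - 1) / n := by
        rw [hW0, hWM, Gaux_one, Gaux_zero n hn, sub_zero]
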